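/- arXiv:1711.05216 — 4 statements merged into one kernel-verified Lean document; each statement's English description precedes it below -/
import Mathlib

section
/- Let ξ be an embedding of (F, O) into an acyclic hypergraph H_a with witness join tree JT rooted at ξ(root of tree(F,O)). Then for any two distinct vertices v, v' in the image of ξ, v is a descendant of v' in JT if and only if ξ⁻¹(v) is a descendant of ξ⁻¹(v') in the output-aware parse tree tree(F, O). -/
/-!
Call `m` *between* `a` and `b` when every walk from `a` to `b` visits `m`; for a tree this
is "`m` lies on the path from `a` to `b`", and both descendant relations are instances of it.
The separation condition says that `ξ c` is between the images of any two neighbours of `c`.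
Walking along a parse-tree path, this propagates to: every vertex of a parse-tree path is
mapped between the images of its ends. That gives one direction of the equivalence. For the
other, if `p'` is not on the path from `rp` to `p`, its neighbour `q` towards `rp` is also on
the path from `p'` to `p`, so `ξ q` is between `ξ p'` and both `ξ rp` and `ξ p`. Since `ξ p'`
lies on the join-tree path from `ξ rp` to `ξ p`, this forces `ξ q = ξ p'`, contradicting
injectivity.
-/

/-- In a tree `G` rooted at `r`, `x` is a descendant of `y` iff `y` lies on every
path from `r` to `x` (in a tree, on *the* unique such path). A vertex is regarded as
a descendant of itself. -/
def Desc {V : Type} (G : SimpleGraph V) (r x y : V) : Prop :=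
  ∀ p : G.Path r x, y ∈ p.val.support

open Function

namespace SimpleGraph

variable {V W : Type*} {G : SimpleGraph V} {H : SimpleGraph W}

def Between (G : SimpleGraph V) (a m b : V) : Prop :=
  ∀ w : G.Walk a b, m ∈ w.support

theorem between_left (a b : V) : G.Between a a b := fun w => w.start_mem_support

theorem between_right (a b : V) : G.Between a b b := fun w => w.end_mem_support

theorem Between.trans_right [DecidableEq V] {a m u b : V} (hm : G.Between a m b)
    (hu : G.Between m u b) : G.Between a u b :=
  fun w => w.support_dropUntil_subset_support (hm w) (hu _)

theorem desc_iff_between {V : Type} {G : SimpleGraph V} {r x y : V} :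
    Desc G r x y ↔ G.Between r y x := by
  classical
  exact ⟨fun h w => w.support_bypass_subset_support (h ⟨w.bypass, w.bypass_isPath⟩),
    fun h P => h P.val⟩

theorem between_of_not_reachable_induce {a b m : V} (ha : a ≠ m) (hb : b ≠ m)
    (h : ¬ (G.induce {v | v ≠ m}).Reachable ⟨a, ha⟩ ⟨b, hb⟩) : G.Between a m b := by
  intro w
  by_contra hm
  have hsub : {v | v ∈ w.support} ⊆ {v | v ≠ m} := fun v hv hvm => hm (hvm ▸ hv)
  exact h ((w.connected_induce_support.preconnected ⟨a, w.start_mem_support⟩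
    ⟨b, w.end_mem_support⟩).map (induceHomOfLE G hsub).toHom)

theorem Walk.IsPath.eq_of_between [DecidableEq V] {x y z m : V} {P : G.Walk x z}
    (hP : P.IsPath) (hy : y ∈ P.support) (hx : G.Between y m x) (hz : G.Between y m z) :
    m = y := by
  have hmx : m ∈ (P.takeUntil y hy).support := by
    simpa using hx (P.takeUntil y hy).reverse
  have hmz : m ∈ (P.dropUntil y hy).support := hz _
  have hdisj : List.Disjoint (P.takeUntil y hy).support (P.dropUntil y hy).support.tail := by
    apply List.disjoint_of_nodup_append
    rw [← Walk.support_append, P.take_spec hy]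
    exact hP.support_nodup
  rw [← Walk.cons_tail_support] at hmz
  exact (List.mem_cons.mp hmz).resolve_right (hdisj hmx)

section Embedding

variable {f : V → W} (hH : H.Preconnected) (hf : Injective f)
  (hsep : ∀ ⦃c q q'⦄, G.Adj c q → G.Adj c q' → q ≠ q' → H.Between (f q) (f c) (f q'))
include hH hf hsep

theorem between_of_adj_of_between {a b c d : V} (hca : G.Adj c a) (hcd : G.Adj c d)
    (had : a ≠ d) (hd : H.Between (f c) (f d) (f b)) : H.Between (f a) (f c) (f b) := by
  classical
  intro w
  obtain ⟨v, hv⟩ := hH.exists_isPath (f d) (f b)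
  have hc := hsep hca hcd had (w.append v.reverse)
  rw [Walk.support_append, List.mem_append] at hc
  refine hc.resolve_right fun hcv => (hcd.ne ?_).elim
  have hcv : f c ∈ v.support := by simpa using List.mem_of_mem_tail hcv
  exact hf (hv.eq_of_between hcv (between_right _ _) hd).symm

theorem Walk.IsPath.between_map {a b u : V} {w : G.Walk a b} (hw : w.IsPath)
    (hu : u ∈ w.support) : H.Between (f a) (f u) (f b) := by
  classical
  induction w generalizing u with
  | nil =>
    rw [Walk.support_nil, List.mem_singleton] at hu
    exact hu ▸ between_left _ _
  | @cons a c b hac w ih =>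
    have hc : H.Between (f a) (f c) (f b) := by
      cases w with
      | nil => exact between_right _ _
      | @cons _ d _ hcd w =>
        have had : a ≠ d := by
          rintro rfl
          exact ((Walk.cons_isPath_iff hac _).mp hw).2 (by simp)
        exact between_of_adj_of_between hH hf hsep hac.symm hcd had (ih hw.of_cons (by simp))
    rcases List.mem_cons.mp (Walk.support_cons hac w ▸ hu) with rfl | hu
    · exact between_left _ _
    · exact hc.trans_right (ih hw.of_cons hu)

theorem between_map_of_between (hG : G.Preconnected) {r x y : V} (h : G.Between r y x) :
    H.Between (f r) (f y) (f x) := by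
  obtain ⟨w, hw⟩ := hG.exists_isPath r x
  exact hw.between_map hH hf hsep (h w)

theorem between_of_between_map (hG : G.Preconnected) {r x y : V}
    (h : H.Between (f r) (f y) (f x)) : G.Between r y x := by
  classical
  by_contra hyx
  obtain ⟨R, hyR⟩ : ∃ R : G.Walk r x, y ∉ R.support := by simpa [Between] using hyx
  obtain ⟨T, hT⟩ := hG.exists_isPath y r
  cases T with
  | nil => exact hyR R.start_mem_support
  | @cons _ q _ hyq T =>
    have hyT : y ∉ T.support := ((Walk.cons_isPath_iff hyq T).mp hT).2
    obtain ⟨Q, hQ, hQTR⟩ :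
        ∃ Q : G.Walk q x, Q.IsPath ∧ Q.support ⊆ (T.append R).support :=
      ⟨_, Walk.bypass_isPath _, Walk.support_bypass_subset_support _⟩
    have hyQ : y ∉ Q.support := fun hyQ => by
      have := hQTR hyQ
      rw [Walk.support_append, List.mem_append] at this
      exact this.elim hyT (hyR ∘ List.mem_of_mem_tail)
    have hqr := hT.between_map hH hf hsep (u := q) (by simp)
    have hqx := ((Walk.cons_isPath_iff hyq Q).mpr ⟨hQ, hyQ⟩).between_map hH hf hsep
      (u := q) (by simp)
    obtain ⟨v, hv⟩ := hH.exists_isPath (f r) (f x)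
    exact hyq.ne (hf (hv.eq_of_between (h v) hqr hqx)).symm

theorem between_map_iff (hG : G.Preconnected) {r x y : V} :
    H.Between (f r) (f y) (f x) ↔ G.Between r y x :=
  ⟨between_of_between_map hH hf hsep hG, between_map_of_between hH hf hsep hG⟩

end Embedding

end SimpleGraph

open SimpleGraph

theorem stmt6_general {VP VJ : Type}
    (PT : SimpleGraph VP) (hPT : PT.IsTree) (rp : VP)
    (JT : SimpleGraph VJ) (hJT : JT.IsTree)
    (ξ : VP → VJ) (hinj : Function.Injective ξ)
    (hcond2 : ∀ p q q', PT.Adj p q → PT.Adj p q' → q ≠ q' →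
      ∀ (hq : ξ q ≠ ξ p) (hq' : ξ q' ≠ ξ p),
        ¬ (JT.induce {v | v ≠ ξ p}).Reachable ⟨ξ q, hq⟩ ⟨ξ q', hq'⟩)
    (p p' : VP) :
    Desc JT (ξ rp) (ξ p) (ξ p') ↔ Desc PT rp p p' := by
  have hsep : ∀ ⦃c q q'⦄, PT.Adj c q → PT.Adj c q' → q ≠ q' →
      JT.Between (ξ q) (ξ c) (ξ q') := fun c q q' hq hq' hqq' =>
    between_of_not_reachable_induce _ _ (hcond2 c q q' hq hq' hqq'
      (fun h => hq.ne' (hinj h)) (fun h => hq'.ne' (hinj h)))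
  rw [desc_iff_between, desc_iff_between]
  exact between_map_iff hJT.connected.preconnected hinj hsep hPT.connected.preconnected

/-- An embedding `ξ` of the output-aware parse tree `tree(F,O)`
(a rooted tree `PT` with root `rp`, vertices labeled with variable sets by `τ`) into a
join tree `JT` (with labels `χ`) — i.e., an injective map satisfying the
label-covering condition (1) and the separation condition (2) — preserves the
descendant relation, where `JT` is rooted at `ξ rp`: for distinct parse-tree vertices
`p, p'`, `ξ p` is a descendant of `ξ p'` in `JT` iff `p` is a descendant of `p'` in
the parse tree. -/
theorem stmt6 {VP VJ α : Type} [Fintype VP] [Fintype VJ]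
    (PT : SimpleGraph VP) (hPT : PT.IsTree) (rp : VP)
    (JT : SimpleGraph VJ) (hJT : JT.IsTree)
    (χ : VJ → Finset α) (τ : VP → Finset α)
    (ξ : VP → VJ) (hinj : Function.Injective ξ)
    (hcond1 : ∀ p, τ p ⊆ χ (ξ p))
    (hcond2 : ∀ p q q', PT.Adj p q → PT.Adj p q' → q ≠ q' →
      ∀ (hq : ξ q ≠ ξ p) (hq' : ξ q' ≠ ξ p),
        ¬ (JT.induce {v | v ≠ ξ p}).Reachable ⟨ξ q, hq⟩ ⟨ξ q', hq'⟩)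
    (p p' : VP) (hne : p ≠ p') :
    Desc JT (ξ rp) (ξ p) (ξ p') ↔ Desc PT rp p p' :=
  stmt6_general PT hPT rp JT hJT ξ hinj hcond2 p p'
end

section
/- Let q₁, …, q_m be a path in the output-aware parse tree tree(F, O) such that q_i is a child of q_{i−1} for each i ∈ {2, …, m}, and suppose ξ is an embedding of (F, O) in an acyclic hypergraph with witness join tree JT (rooted at the image of the root), such that ξ(q_i) is a descendant of ξ(q₁) in JT for each i ∈ {2, …, m−1}. Then ξ(q_i) is a descendant of ξ(q_{i−1}) in JT for each i ∈ {2, …, m}. -/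
/-- `c` is a child of `p` in the tree `G` rooted at `r`. -/
def IsChild {V : Type} (G : SimpleGraph V) (r c p : V) : Prop :=
  G.Adj p c ∧ Desc G r c p

open SimpleGraph

variable {V : Type} {G : SimpleGraph V} {r x y z : V}

lemma desc_of_mem_support (hG : G.IsAcyclic) (p : G.Path r x) (h : y ∈ p.val.support) :
    Desc G r x y :=
  fun p' => (hG.subsingleton_path r x).elim p p' ▸ h

lemma desc_root : Desc G r x r :=
  fun p => p.val.start_mem_support

lemma Desc.antisymm (hG : G.Preconnected) (hxy : Desc G r x y) (hyx : Desc G r y x) :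
    x = y := by
  classical
  -- `x` lies on the segment of the root path of `x` that ends at `y`; paths do not repeat vertices.
  obtain ⟨w⟩ := hG r x
  have hy : y ∈ w.toPath.val.support := hxy w.toPath
  have hx : x ∈ (w.toPath.val.takeUntil y hy).support :=
    hyx ⟨_, w.toPath.property.takeUntil hy⟩
  have hnodup := w.toPath.property.support_nodup
  rw [← w.toPath.val.take_spec hy, Walk.support_append] at hnodup
  have hxD : x ∈ (w.toPath.val.dropUntil y hy).support := Walk.end_mem_support _
  rw [← Walk.cons_tail_support, List.mem_cons] at hxD
  exact hxD.resolve_right ((List.nodup_append'.mp hnodup).2.2 hx)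

lemma isChild_of_isPath_cons (hG : G.IsAcyclic) {u v : V} (h : G.Adj v u) (w : G.Walk u r)
    (hw : (Walk.cons h w).IsPath) : IsChild G r v u := by
  refine ⟨h.symm, desc_of_mem_support hG ⟨_, hw.reverse⟩ ?_⟩
  simp

lemma IsChild.ne_of_isChild (hG : G.Preconnected) {u v c : V} (hvu : IsChild G r v u)
    (hcv : IsChild G r c v) : u ≠ c := by
  rintro rfl
  exact hvu.1.ne (Desc.antisymm hG hcv.2 hvu.2)

lemma mem_support_of_not_reachable_induce_ne {a b : V} (ha : a ≠ z) (hb : b ≠ z)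
    (h : ¬ (G.induce {v | v ≠ z}).Reachable ⟨a, ha⟩ ⟨b, hb⟩) (w : G.Walk a b) :
    z ∈ w.support := by
  by_contra hz
  exact h (w.induce {v | v ≠ z} fun v hv (hvz : v = z) => hz (hvz ▸ hv)).reachable

lemma Desc.desc_of_separates (hG : G.IsTree) {a b c : V} (hab : a ≠ b)
    (hsep : ∀ w : G.Walk a c, b ∈ w.support) (hba : Desc G r b a) : Desc G r c b := by
  classical
  intro p
  obtain ⟨w⟩ := hG.connected.preconnected r a
  have hb_notin : b ∉ w.toPath.val.support := fun hb =>
    hab (Desc.antisymm hG.connected.preconnected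
      (desc_of_mem_support hG.isAcyclic w.toPath hb) hba)
  have := hsep (w.toPath.val.reverse.append p.val)
  rw [Walk.mem_support_append_iff, Walk.support_reverse, List.mem_reverse] at this
  exact this.resolve_left hb_notin

theorem desc_image_of_isChild {VP VJ : Type} {PT : SimpleGraph VP} {JT : SimpleGraph VJ}
    (hPT : PT.IsTree) (hJT : JT.IsTree) {rp : VP} {ξ : VP → VJ} (hinj : Function.Injective ξ)
    (hcond2 : ∀ p q q', PT.Adj p q → PT.Adj p q' → q ≠ q' →
      ∀ (hq : ξ q ≠ ξ p) (hq' : ξ q' ≠ ξ p),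
        ¬ (JT.induce {v | v ≠ ξ p}).Reachable ⟨ξ q, hq⟩ ⟨ξ q', hq'⟩)
    {v c : VP} (hcv : IsChild PT rp c v) : Desc JT (ξ rp) (ξ c) (ξ v) := by
  classical
  suffices ∀ {v x} (w : PT.Walk v x), w.IsPath → x = rp →
      ∀ {c}, IsChild PT rp c v → Desc JT (ξ rp) (ξ c) (ξ v) by
    obtain ⟨w⟩ := hPT.connected.preconnected v rp
    exact this w.toPath.val w.toPath.property rfl hcv
  intro v x w
  induction w with
  | nil => rintro - rfl c -; exact desc_root
  | @cons v u x hvu w ih =>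
    rintro hw rfl c hcv
    have hu : IsChild PT x v u := isChild_of_isPath_cons hPT.isAcyclic hvu w hw
    have hξu : ξ u ≠ ξ v := fun e => hvu.ne' (hinj e)
    have hξc : ξ c ≠ ξ v := fun e => hcv.1.ne' (hinj e)
    have hsep : ∀ wj : JT.Walk (ξ u) (ξ c), ξ v ∈ wj.support :=
      mem_support_of_not_reachable_induce_ne hξu hξc <| hcond2 v u c hvu hcv.1
        (hu.ne_of_isChild hPT.connected.preconnected hcv) hξu hξc
    exact (ih hw.of_cons rfl hu).desc_of_separates hJT hξu hsep

theorem stmt7_general {VP VJ : Type}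
    (PT : SimpleGraph VP) (hPT : PT.IsTree) (rp : VP)
    (JT : SimpleGraph VJ) (hJT : JT.IsTree)
    (ξ : VP → VJ) (hinj : Function.Injective ξ)
    (hcond2 : ∀ p q q', PT.Adj p q → PT.Adj p q' → q ≠ q' →
      ∀ (hq : ξ q ≠ ξ p) (hq' : ξ q' ≠ ξ p),
        ¬ (JT.induce {v | v ≠ ξ p}).Reachable ⟨ξ q, hq⟩ ⟨ξ q', hq'⟩)
    (m : ℕ) (q : Fin (m + 1) → VP)
    (hchild : ∀ i : Fin m, IsChild PT rp (q i.succ) (q i.castSucc)) :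
    ∀ i : Fin m, Desc JT (ξ rp) (ξ (q i.succ)) (ξ (q i.castSucc)) :=
  fun i => desc_image_of_isChild hPT hJT hinj hcond2 (hchild i)

/-- Let `q 0, q 1, …, q m` be a path in the parse tree `PT` (rooted at
`rp`) where each `q (i+1)` is a child of `q i`, and let `ξ` be an embedding of the
parse tree into the join tree `JT` (rooted at `ξ rp`) such that `ξ (q i)` is a
descendant of `ξ (q 0)` for each `1 ≤ i < m`. Then `ξ (q (i+1))` is a descendant of
`ξ (q i)` in `JT` for each `i < m`. -/
theorem stmt7 {VP VJ α : Type} [Fintype VP] [Fintype VJ]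
    (PT : SimpleGraph VP) (hPT : PT.IsTree) (rp : VP)
    (JT : SimpleGraph VJ) (hJT : JT.IsTree)
    (χ : VJ → Finset α) (τ : VP → Finset α)
    (ξ : VP → VJ) (hinj : Function.Injective ξ)
    (hcond1 : ∀ p, τ p ⊆ χ (ξ p))
    (hcond2 : ∀ p q q', PT.Adj p q → PT.Adj p q' → q ≠ q' →
      ∀ (hq : ξ q ≠ ξ p) (hq' : ξ q' ≠ ξ p),
        ¬ (JT.induce {v | v ≠ ξ p}).Reachable ⟨ξ q, hq⟩ ⟨ξ q', hq'⟩)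
    (m : ℕ) (q : Fin (m + 1) → VP)
    (hchild : ∀ i : Fin m, IsChild PT rp (q i.succ) (q i.castSucc))
    (hdesc : ∀ i : Fin (m + 1), 1 ≤ (i : ℕ) → (i : ℕ) < m →
      Desc JT (ξ rp) (ξ (q i)) (ξ (q 0))) :
    ∀ i : Fin m, Desc JT (ξ rp) (ξ (q i.succ)) (ξ (q i.castSucc)) :=
  stmt7_general PT hPT rp JT hJT ξ hinj hcond2 m q hchild
end

section
/- With c processors, where each round processes up to c shunt operations in parallel, contracting a strictly binary e-join tree with n vertices requires at most 2(⌈log₂ c⌉ + 2⌈n/(4c)⌉) parallel shunt steps: first 2⌈n/(4c)⌉ − 1 full-load steps until the number of operations per round fits within c, followed by 2⌈log₂ c⌉ halving steps. -/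
/-!
Each round halves the number of leaves, so there are about `⌈log₂ ℓ⌉` rounds, and the costs
`⌈ℓ'/c⌉` of the rounds form a (rounded) geometric series. Both effects are captured by the
invariant `parSteps c ℓ ≤ ⌈log₂ ℓ⌉ + ⌈ℓ/c⌉`, which survives a round because
`2⌈⌈ℓ/2⌉/c⌉ ≤ ⌈ℓ/c⌉ + 1`. With `K = ⌈n/(4c)⌉` there are at most `2cK` leaves, so
`⌈ℓ/c⌉ ≤ 2K` and, since `2K ≤ 2^K`, `⌈log₂ ℓ⌉ ≤ ⌈log₂ c⌉ + K`.
-/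

/-- Total number of parallel steps of the shunt-based contraction with `c`
processors, starting from `ℓ` leaves: each round performs `⌈ℓ/2⌉` shunt operations,
costing `⌈⌈ℓ/2⌉/c⌉` parallel steps, after which `⌈ℓ/2⌉` leaves remain; the process
stops when `ℓ ≤ 2`. -/
def parSteps (c : ℕ) (ℓ : ℕ) : ℕ :=
  if ℓ ≤ 2 then 0
  else ((ℓ + 1) / 2 + (c - 1)) / c + parSteps c ((ℓ + 1) / 2)
termination_by ℓ
decreasing_by omega

lemma two_mul_le_two_pow (k : ℕ) : 2 * k ≤ 2 ^ k := by
  induction k with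
  | zero => simp
  | succ k ih =>
    have := Nat.one_le_two_pow (n := k)
    rw [pow_succ]
    omega

lemma two_mul_ceilDiv_half_le {c : ℕ} (hc : 0 < c) (ℓ : ℕ) :
    2 * ((ℓ + 1) / 2 ⌈/⌉ c) ≤ ℓ ⌈/⌉ c + 1 := by
  simp only [Nat.ceilDiv_eq_add_pred_div]
  set q := ((ℓ + 1) / 2 + c - 1) / c
  have hq : q * c ≤ (ℓ + 1) / 2 + c - 1 := Nat.div_mul_le_self _ _
  have : 2 * q - 1 ≤ (ℓ + c - 1) / c := by
    rw [Nat.le_div_iff_mul_le hc, Nat.sub_mul, one_mul, mul_assoc]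
    omega
  omega

lemma parSteps_of_two_lt {c ℓ : ℕ} (hc : 0 < c) (hℓ : 2 < ℓ) :
    parSteps c ℓ = (ℓ + 1) / 2 ⌈/⌉ c + parSteps c ((ℓ + 1) / 2) := by
  rw [parSteps, if_neg (by omega), Nat.ceilDiv_eq_add_pred_div, Nat.add_sub_assoc hc]

lemma parSteps_le_clog_add_ceilDiv {c : ℕ} (hc : 0 < c) (ℓ : ℕ) :
    parSteps c ℓ ≤ Nat.clog 2 ℓ + ℓ ⌈/⌉ c := by
  induction ℓ using Nat.strong_induction_on with
  | _ ℓ ih =>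
    by_cases hℓ : ℓ ≤ 2
    · simp [parSteps, hℓ]
    have hclog : Nat.clog 2 ℓ = Nat.clog 2 ((ℓ + 1) / 2) + 1 :=
      Nat.clog_of_two_le one_lt_two (by omega)
    have hrest := ih ((ℓ + 1) / 2) (by omega)
    have hhalf := two_mul_ceilDiv_half_le hc ℓ
    rw [parSteps_of_two_lt hc (by omega)]
    omega

theorem stmt14_general (n c : ℕ) (hc : 1 ≤ c) :
    parSteps c ((n + 1) / 2)
      ≤ 2 * (Nat.clog 2 c + 2 * ((n + 4 * c - 1) / (4 * c))) := by
  set K := (n + 4 * c - 1) / (4 * c)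
  set ℓ := (n + 1) / 2
  have hnK : n ≤ 4 * c * K := (ceilDiv_le_iff_le_mul (by omega)).1 le_rfl
  have hℓ : ℓ ≤ c * (2 * K) := by
    have : 4 * c * K = 2 * (c * (2 * K)) := by ring
    omega
  have hceil : ℓ ⌈/⌉ c ≤ 2 * K := (ceilDiv_le_iff_le_mul hc).2 hℓ
  have hclog : Nat.clog 2 ℓ ≤ Nat.clog 2 c + K := by
    rw [Nat.clog_le_iff_le_pow one_lt_two, pow_add]
    calc ℓ ≤ c * (2 * K) := hℓ
      _ ≤ 2 ^ Nat.clog 2 c * 2 ^ K :=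
        Nat.mul_le_mul (Nat.le_pow_clog one_lt_two c) (two_mul_le_two_pow K)
  have := parSteps_le_clog_add_ceilDiv hc ℓ
  omega

/-- With `c` processors (`1 ≤ c ≤ ⌈n/4⌉`), contracting a strictly
binary e-join tree with `n` vertices (hence `(n+1)/2` leaves) requires at most
`2(⌈log₂ c⌉ + 2⌈n/(4c)⌉)` parallel shunt steps. -/
theorem stmt14 (n c : ℕ) (hc : 1 ≤ c) (hcn : c ≤ (n + 3) / 4) :
    parSteps c ((n + 1) / 2)
      ≤ 2 * (Nat.clog 2 c + 2 * ((n + 4 * c - 1) / (4 * c))) :=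
  stmt14_general n c hc
end

section
/- Let ⊕ be associative and commutative on D, totally ordered by ≥, with a neutral element 0 (a ⊕ 0 = a). Define the extended join of two weighted relations R₁, R₂ (finite sets of assignments each carrying a value in D) as the set of join-compatible unions θ = θ' ∪ θ'' with value val(θ) = max over all decompositions of val(θ') ⊕ val(θ''), and the extended projection over a variable set X as the set of restrictions with value the max over preimages. If vars(R₂) ⊆ X and ⊕ is monotone in each argument, then Π^⊕_X(R₁ ⋈^⊕ R₂) = (Π^⊕_{X ∩ vars(R₁)} R₁) ⋈^⊕ R₂. -/
/-- A weighted relation over the scope `W` is represented by its value function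
`R : (Var → U) → D`, where `R θ` depends only on the restriction of `θ` to `W`
and `R θ = ⊥` means that the assignment is not in the relation. -/
def WRelDependsOn {Var U D : Type} (W : Finset Var) (R : (Var → U) → D) : Prop :=
  ∀ θ θ' : Var → U, (∀ x ∈ W, θ x = θ' x) → R θ = R θ'

/-- Extended join `R₁ ⋈^⊕ R₂`: an assignment is in the join iff its restrictions are
in both relations (value ≠ ⊥, since `⊥` is absorbing for `⊕`), with value the
`⊕`-combination of the values of the (uniquely determined) decomposition. -/
def ejoin {Var U D : Type} (op : D → D → D) (R₁ R₂ : (Var → U) → D) :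
    (Var → U) → D :=
  fun θ => op (R₁ θ) (R₂ θ)

/-- Extended projection `Π^⊕_X R`: the value of a restriction is the maximum of the
values over all preimages agreeing with it on `X`. -/
def eproj {Var U D : Type} [Fintype Var] [Fintype U] [DecidableEq Var]
    [DecidableEq U] [LinearOrder D] [OrderBot D]
    (X : Finset Var) (R : (Var → U) → D) : (Var → U) → D :=
  fun θ => Finset.univ.sup (fun θ' : Var → U =>
    if ∀ x ∈ X, θ' x = θ x then R θ' else ⊥)

/-- For `⊕` associative, commutative, monotone in each argument, with
neutral element and absorbing bottom, on a totally ordered set of weights, extended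
projection distributes over extended join when the scope of `R₂` is preserved:
if `vars(R₂) = W₂ ⊆ X` then `Π^⊕_X (R₁ ⋈^⊕ R₂) = (Π^⊕_{X ∩ W₁} R₁) ⋈^⊕ R₂`. -/
theorem stmt17 {Var U D : Type} [Fintype Var] [Fintype U] [DecidableEq Var]
    [DecidableEq U] [LinearOrder D] [OrderBot D]
    (op : D → D → D)
    (hcomm : ∀ a b : D, op a b = op b a)
    (hassoc : ∀ a b c : D, op (op a b) c = op a (op b c))
    (e : D) (hneut : ∀ a : D, op a e = a)
    (hbotl : ∀ a : D, op ⊥ a = ⊥) (hbotr : ∀ a : D, op a ⊥ = ⊥)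
    (hmono : ∀ a a' b b' : D, a ≤ a' → b ≤ b' → op a b ≤ op a' b')
    (W₁ W₂ X : Finset Var) (R₁ R₂ : (Var → U) → D)
    (h₁ : WRelDependsOn W₁ R₁) (h₂ : WRelDependsOn W₂ R₂) (hWX : W₂ ⊆ X) :
    eproj X (ejoin op R₁ R₂) = ejoin op (eproj (X ∩ W₁) R₁) R₂ := by
  funext θ
  apply le_antisymm
  · apply Finset.sup_le
    intro θ' _
    by_cases h : ∀ x ∈ X, θ' x = θ x
    · rw [if_pos h]
      have hR2 : R₂ θ' = R₂ θ := h₂ θ' θ (fun x hx => h x (hWX hx))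
      show op (R₁ θ') (R₂ θ') ≤ op (eproj (X ∩ W₁) R₁ θ) (R₂ θ)
      rw [hR2]
      refine hmono _ _ _ _ ?_ le_rfl
      have : R₁ θ' =
          (fun θ'' : Var → U => if ∀ x ∈ X ∩ W₁, θ'' x = θ x then R₁ θ'' else ⊥) θ' := by
        show R₁ θ' = if ∀ x ∈ X ∩ W₁, θ' x = θ x then R₁ θ' else ⊥
        rw [if_pos (fun x hx => h x (Finset.mem_inter.1 hx).1)]
      exact le_of_eq_of_le this (Finset.le_sup
        (f := fun θ'' : Var → U => if ∀ x ∈ X ∩ W₁, θ'' x = θ x then R₁ θ'' else ⊥)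
        (Finset.mem_univ θ'))
    · rw [if_neg h]; exact bot_le
  · show op (eproj (X ∩ W₁) R₁ θ) (R₂ θ) ≤ _
    obtain ⟨θ'', -, hθ''⟩ := Finset.exists_mem_eq_sup Finset.univ
      ⟨θ, Finset.mem_univ θ⟩
      (fun θ'' : Var → U => if ∀ x ∈ X ∩ W₁, θ'' x = θ x then R₁ θ'' else ⊥)
    rw [eproj, hθ'']
    by_cases h : ∀ x ∈ X ∩ W₁, θ'' x = θ x
    · rw [if_pos h]
      set θ₀ : Var → U := fun x => if x ∈ X then θ x else θ'' x with hθ₀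
      have hagree : ∀ x ∈ X, θ₀ x = θ x := fun x hx => by
        show (if x ∈ X then θ x else θ'' x) = θ x
        rw [if_pos hx]
      have hR2 : R₂ θ₀ = R₂ θ := h₂ θ₀ θ (fun x hx => hagree x (hWX hx))
      have hR1 : R₁ θ₀ = R₁ θ'' := by
        refine h₁ θ₀ θ'' (fun x hx => ?_)
        by_cases hxX : x ∈ X
        · show (if x ∈ X then θ x else θ'' x) = θ'' x
          rw [if_pos hxX]
          exact (h x (Finset.mem_inter.2 ⟨hxX, hx⟩)).symm
        · show (if x ∈ X then θ x else θ'' x) = θ'' x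
          rw [if_neg hxX]
      have : op (R₁ θ'') (R₂ θ) =
          (fun θ' : Var → U => if ∀ x ∈ X, θ' x = θ x then ejoin op R₁ R₂ θ' else ⊥) θ₀ := by
        show _ = if ∀ x ∈ X, θ₀ x = θ x then ejoin op R₁ R₂ θ₀ else ⊥
        rw [if_pos hagree]
        show op (R₁ θ'') (R₂ θ) = op (R₁ θ₀) (R₂ θ₀)
        rw [hR1, hR2]
      rw [this]
      exact Finset.le_sup
        (f := fun θ' : Var → U => if ∀ x ∈ X, θ' x = θ x then ejoin op R₁ R₂ θ' else ⊥)
        (Finset.mem_univ θ₀)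
    · rw [if_neg h, hbotl]; exact bot_le
end
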